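/- Let A be a 2×2 integer matrix with determinant 1 and trace > 2, and let 𝒳, 𝒴 ⊆ 𝕋² be disjoint finite f_A-invariant sets with 𝒴 nonempty, and x ∈ 𝒳̃. Then every positive 𝒳-staircase (R_i)_{i≥0} with origin x all of whose rectangles are disjoint from the lift 𝒴̃ has an axis of finite length, i.e. the series Σ_{i≥0} ℓ^u(R_i) converges. -/

import Mathlib

/- Common setup: following the paper, we identify each subset of the torus
`𝕋² = ℝ²/ℤ²` with its (`ℤ²`-saturated) lift to `ℝ²`. -/

open Matrix Set
open scoped Pointwise

namespace Paper

/-- Points of the plane ℝ². -/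
abbrev V : Type := Fin 2 → ℝ

/-- The integer lattice ℤ² ⊆ ℝ². -/
def lattice : Set V := Set.range fun m : Fin 2 → ℤ => fun i => (m i : ℝ)

/-- The linear action of an integer matrix on ℝ². -/
def actR (A : Matrix (Fin 2) (Fin 2) ℤ) (v : V) : V :=
  (A.map (Int.cast : ℤ → ℝ)).mulVec v

/-- `E ⊆ ℝ²` is the lift of a finite subset of the torus. -/
def IsTorusFinite (E : Set V) : Prop := ∃ F : Set V, F.Finite ∧ E = F + lattice

/-- `E` is the lift of an `f_A`-invariant subset of the torus. -/
def IsInvariant (A : Matrix (Fin 2) (Fin 2) ℤ) (E : Set V) : Prop := actR A '' E = E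

/-- `E` is the lift of a periodic orbit of `f_A`. -/
def IsPeriodicOrbit (A : Matrix (Fin 2) (Fin 2) ℤ) (E : Set V) : Prop :=
  ∃ x : V, ∃ p : ℕ, 0 < p ∧ (actR A)^[p] x - x ∈ lattice ∧
    E = {v | ∃ i : ℕ, v - (actR A)^[i] x ∈ lattice}

/-- A rectangle `R(p; s, u)`, recorded via its basepoint `p` and its side
lengths `s, u > 0` (in the directions of the fixed eigenvectors `v^s, v^u`). -/
structure Rect where
  p : V
  s : ℝ
  u : ℝ
  s_pos : 0 < s
  u_pos : 0 < u

namespace Rect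

/-- The set of points of the rectangle `R(p;s,u)`. -/
def carrier (vs vu : V) (R : Rect) : Set V :=
  {q | ∃ a b : ℝ, 0 ≤ a ∧ a ≤ R.s ∧ 0 ≤ b ∧ b ≤ R.u ∧ q = R.p + a • vs + b • vu}

/-- Endpoint of the increasing diagonal (whose origin is `R.p`). -/
def incEnd (vs vu : V) (R : Rect) : V := R.p + R.s • vs + R.u • vu

/-- Origin of the decreasing diagonal. -/
def decOrigin (vs : V) (R : Rect) : V := R.p + R.s • vs

/-- Endpoint of the decreasing diagonal. -/
def decEnd (vu : V) (R : Rect) : V := R.p + R.u • vu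

/-- `R` is a positive `E`-rectangle. -/
def IsPos (vs vu : V) (E : Set V) (R : Rect) : Prop :=
  R.p ∈ E ∧ R.incEnd vs vu ∈ E

/-- `R` is a negative `E`-rectangle. -/
def IsNeg (vs vu : V) (E : Set V) (R : Rect) : Prop :=
  R.decOrigin vs ∈ E ∧ R.decEnd vu ∈ E

/-- `R` is a primitive positive `E`-rectangle. -/
def IsPrimPos (vs vu : V) (E : Set V) (R : Rect) : Prop :=
  R.IsPos vs vu E ∧ R.carrier vs vu ∩ E = {R.p, R.incEnd vs vu}

/-- `R` is a primitive negative `E`-rectangle. -/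
def IsPrimNeg (vs vu : V) (E : Set V) (R : Rect) : Prop :=
  R.IsNeg vs vu E ∧ R.carrier vs vu ∩ E = {R.decOrigin vs, R.decEnd vu}

/-- Bottom stable side of a rectangle. -/
def botSide (vs : V) (R : Rect) : Set V :=
  {q | ∃ a : ℝ, 0 ≤ a ∧ a ≤ R.s ∧ q = R.p + a • vs}

/-- Top stable side of a rectangle. -/
def topSide (vs vu : V) (R : Rect) : Set V :=
  {q | ∃ a : ℝ, 0 ≤ a ∧ a ≤ R.s ∧ q = R.p + a • vs + R.u • vu}

/-- Left unstable side of a rectangle. -/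
def leftSide (vu : V) (R : Rect) : Set V :=
  {q | ∃ b : ℝ, 0 ≤ b ∧ b ≤ R.u ∧ q = R.p + b • vu}

/-- Interior of a rectangle. -/
def interior (vs vu : V) (R : Rect) : Set V :=
  {q | ∃ a b : ℝ, 0 < a ∧ a < R.s ∧ 0 < b ∧ b < R.u ∧ q = R.p + a • vs + b • vu}

end Rect

/-- The (closed) quadrant `C₊₊(x)`. -/
def quadPP (vs vu x : V) : Set V :=
  {q | ∃ a b : ℝ, 0 ≤ a ∧ 0 ≤ b ∧ q = x + a • vs + b • vu}

/-- `D` is a right horizontal subrectangle of `R`. -/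
def IsRightHorizSub (vs : V) (D R : Rect) : Prop :=
  D.s ≤ R.s ∧ D.u = R.u ∧ D.p = R.p + (R.s - D.s) • vs

/-- A positive `X`-string with origin `x`: a sequence of positive `X`-rectangles,
the first one having `x` as origin of its increasing diagonal, consecutive ones
meeting exactly at one point which is the endpoint of the increasing diagonal of
the former and the origin of the increasing diagonal of the latter. -/
def IsPosString (vs vu : V) (X : Set V) (x : V) (R : ℕ → Rect) : Prop :=
  (∀ i, (R i).IsPos vs vu X) ∧ (R 0).p = x ∧
    ∀ i, (R i).carrier vs vu ∩ (R (i + 1)).carrier vs vu = {(R i).incEnd vs vu} ∧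
      (R (i + 1)).p = (R i).incEnd vs vu

/-- A positive `X`-staircase with origin `x`. -/
def IsPosStaircase (vs vu : V) (X : Set V) (x : V) (R : ℕ → Rect) : Prop :=
  (∀ i, (R i).carrier vs vu ⊆ quadPP vs vu x) ∧
    ∃ Del : ℕ → Rect, IsPosString vs vu X x Del ∧ R 0 = Del 0 ∧
      (∀ i, 1 ≤ i → IsRightHorizSub vs (Del i) (R i)) ∧
      (∀ i, (R i).topSide vs vu ⊆ (R (i + 1)).botSide vs) ∧
      ∃ C : ℝ, ∀ i, (Del (i + 1)).s / (Del i).s ≤ C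

/-- Stable side lengths of the primitive positive `(X, x)`-rectangles. -/
def baseLengths (vs vu : V) (X : Set V) (x : V) : Set ℝ :=
  {s | ∃ R : Rect, R.IsPrimPos vs vu X ∧ R.p = x ∧ R.s = s}

/-- The Euclidean norm of a point of ℝ². -/
noncomputable def euclNorm (v : V) : ℝ := Real.sqrt ((v 0) ^ 2 + (v 1) ^ 2)

/-- `Y` is the lift of an `ε`-dense subset of the torus, for the metric on the
torus induced by the Euclidean metric of ℝ². -/
def EDense (ε : ℝ) (Y : Set V) : Prop := ∀ v : V, ∃ y ∈ Y, euclNorm (v - y) ≤ ε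

/-- The lift of `{(0,1/2), (1/2,0), (1/2,1/2)}`, i.e. the set
`{(0,1/2), (1/2,0), (1/2,1/2)} + ℤ²`. -/
def halfPoints : Set V :=
  {v : V | ∃ w ∈ ({![0, 1/2], ![1/2, 0], ![1/2, 1/2]} : Set V), v - w ∈ lattice}

/-- The lift of the point `(1/2,1/2)` of the torus, i.e. `(1/2,1/2) + ℤ²`. -/
def halfCenter : Set V := {v : V | v - ![1/2, 1/2] ∈ lattice}

/-
In coordinates `(σ, β)` along the eigenbasis `(v^s, v^u)`, the top side of each `R_i`
lies on the bottom side of `R_{i+1}`. Hence the stable interval of every `R_i` contains that of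
`R_0`, and the unstable intervals tile `[β p₀, β p₀ + Σ ℓ^u(R_i))`. If the series diverged, the
staircase would cover a half-strip `σ ∈ [σ p₀, σ p₀ + s₀]`, `β ≥ β p₀`. But every such half-strip
meets every translate `y + ℤ²`: the lattice meets the eigenlines only in `0` (otherwise `A` or its
inverse `adj A` would contract a nonzero integer vector forever), so some lattice vector lies in
an open quadrant of the eigenbasis; its images under `A^n` have arbitrarily small stable and large
unstable coordinate, and a suitable integer multiple lands in the strip. So the staircase meets `Ỹ`.
-/

open Filter Topology

theorem actR_smul (C : Matrix (Fin 2) (Fin 2) ℤ) (c : ℝ) (v : V) : actR C (c • v) = c • actR C v :=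
  Matrix.mulVec_smul _ _ _

theorem actR_actR_adjugate {A : Matrix (Fin 2) (Fin 2) ℤ} (hdet : A.det = 1) (v : V) :
    actR A (actR A.adjugate v) = v := by
  have h := Matrix.map_mul (L := A) (M := A.adjugate) (f := Int.castRingHom ℝ)
  rw [Matrix.mul_adjugate, hdet, one_smul, Matrix.map_one _ (map_zero _) (map_one _)] at h
  rw [actR, actR, Matrix.mulVec_mulVec]
  exact (congrArg (· *ᵥ v) h).symm.trans (Matrix.one_mulVec v)

def latticeAddSubgroup : AddSubgroup V := (AddMonoidHom.compLeft (Int.castAddHom ℝ) (Fin 2)).range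

theorem add_mem_lattice {v w : V} (hv : v ∈ lattice) (hw : w ∈ lattice) : v + w ∈ lattice :=
  latticeAddSubgroup.add_mem hv hw

theorem neg_mem_lattice {v : V} (hv : v ∈ lattice) : -v ∈ lattice :=
  latticeAddSubgroup.neg_mem hv

theorem sub_mem_lattice {v w : V} (hv : v ∈ lattice) (hw : w ∈ lattice) : v - w ∈ lattice :=
  latticeAddSubgroup.sub_mem hv hw

theorem nsmul_mem_lattice (n : ℕ) {v : V} (hv : v ∈ lattice) : (n : ℝ) • v ∈ lattice := by
  rw [Nat.cast_smul_eq_nsmul]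
  exact latticeAddSubgroup.nsmul_mem hv n

theorem mapsTo_actR_lattice (C : Matrix (Fin 2) (Fin 2) ℤ) : MapsTo (actR C) lattice lattice := by
  rintro _ ⟨k, rfl⟩
  exact ⟨C *ᵥ k, funext fun i => (Int.castRingHom ℝ).map_mulVec C k i⟩

theorem eq_zero_of_mem_lattice_of_norm_lt_one {m : V} (hm : m ∈ lattice) (h : ‖m‖ < 1) : m = 0 := by
  obtain ⟨k, rfl⟩ := hm
  funext i
  have hi := (pi_norm_lt_iff one_pos).1 h i
  rw [Real.norm_eq_abs, ← Int.cast_abs, ← Int.cast_one, Int.cast_lt, Int.abs_lt_one_iff] at hi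
  simp [hi]

theorem eq_zero_of_mem_lattice_of_actR_eq_smul {C : Matrix (Fin 2) (Fin 2) ℤ} {c : ℝ} (hc0 : c ≠ 0)
    (hc1 : |c| < 1) {m : V} (hm : m ∈ lattice) (hCm : actR C m = c • m) : m = 0 := by
  have hiter : ∀ n, (actR C)^[n] m = c ^ n • m := by
    intro n
    induction n with
    | zero => simp
    | succ n ih => rw [Function.iterate_succ_apply', ih, actR_smul, hCm, smul_smul, pow_succ]
  have hsmall : ∀ᶠ n in atTop, ‖c ^ n • m‖ < 1 := by
    have h := (tendsto_pow_atTop_nhds_zero_of_lt_one (abs_nonneg c) hc1).mul_const ‖m‖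
    rw [zero_mul] at h
    simpa [norm_smul] using h.eventually_lt_const one_pos
  obtain ⟨n, hn⟩ := hsmall.exists
  have h := eq_zero_of_mem_lattice_of_norm_lt_one (hiter n ▸ (mapsTo_actR_lattice C).iterate n hm) hn
  exact (smul_eq_zero.1 h).resolve_left (pow_ne_zero n hc0)

theorem iterate_apply_eq_pow_mul {α : Type*} {f : α → α} {g : α → ℝ} {c : ℝ}
    (h : ∀ v, g (f v) = c * g v) (n : ℕ) (v : α) : g (f^[n] v) = c ^ n * g v := by
  simpa only [mul_left_iterate] using Function.Semiconj.iterate_right (gb := (c * ·)) h n v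

theorem exists_nat_mul_mem_Icc {τ α s : ℝ} (hτ : 0 < τ) (hτs : τ ≤ s) (hτα : τ ≤ α + s) :
    ∃ j : ℕ, 1 ≤ j ∧ (j : ℝ) * τ ∈ Icc α (α + s) := by
  have hq : 1 ≤ (α + s) / τ := (one_le_div hτ).2 hτα
  refine ⟨⌊(α + s) / τ⌋₊, Nat.one_le_floor_iff _ |>.2 hq, ?_, ?_⟩
  · have := Nat.lt_floor_add_one ((α + s) / τ)
    rw [div_lt_iff₀ hτ] at this
    nlinarith
  · have := Nat.floor_le (zero_le_one.trans hq)
    rwa [le_div_iff₀ hτ] at this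

section Coordinates

variable {σ β : V →ₗ[ℝ] ℝ}

theorem eq_zero_of_mem_lattice_of_apply_eq_zero (hinj : ∀ v, σ v = 0 → β v = 0 → v = 0)
    {C : Matrix (Fin 2) (Fin 2) ℤ} {c d : ℝ} (hc0 : c ≠ 0) (hc1 : |c| < 1)
    (hσ : ∀ v, σ (actR C v) = c * σ v) (hβ : ∀ v, β (actR C v) = d * β v)
    {m : V} (hm : m ∈ lattice) (hβm : β m = 0) : m = 0 := by
  refine eq_zero_of_mem_lattice_of_actR_eq_smul (C := C) hc0 hc1 hm (sub_eq_zero.1 (hinj _ ?_ ?_))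
  · simp [hσ]
  · simp [hβ, hβm]

theorem apply_actR_adjugate {A : Matrix (Fin 2) (Fin 2) ℤ} (hdet : A.det = 1) {g : V →ₗ[ℝ] ℝ}
    {c : ℝ} (hc : c ≠ 0) (hg : ∀ v, g (actR A v) = c * g v) (v : V) :
    g (actR A.adjugate v) = c⁻¹ * g v := by
  rw [eq_inv_mul_iff_mul_eq₀ hc, ← hg, actR_actR_adjugate hdet]

variable {A : Matrix (Fin 2) (Fin 2) ℤ} {lam : ℝ} (hlam : 1 < lam)
  (hσ : ∀ v, σ (actR A v) = lam⁻¹ * σ v) (hβ : ∀ v, β (actR A v) = lam * β v)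
include hlam hσ hβ

theorem exists_mem_lattice_apply_ne_zero (hdet : A.det = 1)
    (hinj : ∀ v, σ v = 0 → β v = 0 → v = 0) :
    ∃ e ∈ lattice, σ e ≠ 0 ∧ β e ≠ 0 := by
  have hlam0 : lam ≠ 0 := by positivity
  have hlam1 : |lam⁻¹| < 1 := by
    rw [abs_of_pos (by positivity)]; exact inv_lt_one_of_one_lt₀ hlam
  have he : (Pi.single 0 1 : V) ∈ lattice := ⟨Pi.single 0 1, by ext i; fin_cases i <;> simp⟩
  refine ⟨Pi.single 0 1, he, fun h => ?_, fun h => ?_⟩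
  · have := eq_zero_of_mem_lattice_of_apply_eq_zero (fun v h₁ h₀ => hinj v h₀ h₁)
      (inv_ne_zero hlam0) hlam1 (apply_actR_adjugate hdet hlam0 hβ)
      (apply_actR_adjugate hdet (inv_ne_zero hlam0) hσ) he h
    simp at this
  · have := eq_zero_of_mem_lattice_of_apply_eq_zero hinj (inv_ne_zero hlam0) hlam1 hσ hβ he h
    simp at this

-- `e`, `-e`, `e - A e` and `A e - e` lie in the four open quadrants of the eigenbasis.
theorem exists_mem_lattice_apply_pos {e : V} (he : e ∈ lattice) (hσe : σ e ≠ 0)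
    (hβe : β e ≠ 0) : ∃ w ∈ lattice, 0 < σ w ∧ 0 < β w := by
  have hlam' : lam⁻¹ < 1 := inv_lt_one_of_one_lt₀ hlam
  have hAe := sub_mem_lattice (mapsTo_actR_lattice A he) he
  have hσAe : σ (actR A e - e) = (lam⁻¹ - 1) * σ e := by rw [map_sub, hσ]; ring
  have hβAe : β (actR A e - e) = (lam - 1) * β e := by rw [map_sub, hβ]; ring
  rcases hσe.lt_or_gt with hσe | hσe <;> rcases hβe.lt_or_gt with hβe | hβe
  · exact ⟨-e, neg_mem_lattice he, by simpa using hσe, by simpa using hβe⟩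
  · exact ⟨_, hAe, by rw [hσAe]; nlinarith, by rw [hβAe]; nlinarith⟩
  · refine ⟨_, neg_mem_lattice hAe, ?_, ?_⟩ <;> rw [map_neg]
    · rw [hσAe]; nlinarith
    · rw [hβAe]; nlinarith
  · exact ⟨e, he, hσe, hβe⟩

theorem exists_mem_lattice_mem_strip_of_pos {w : V} (hw : w ∈ lattice) (hσw : 0 < σ w)
    (hβw : 0 < β w) {α s : ℝ} (B : ℝ) (hs : 0 < s) (hαs : 0 < α + s) :
    ∃ m ∈ lattice, σ m ∈ Icc α (α + s) ∧ B ≤ β m := by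
  have hσsmall : ∀ᶠ n : ℕ in atTop, lam⁻¹ ^ n * σ w < min s (α + s) := by
    have h := (tendsto_pow_atTop_nhds_zero_of_lt_one (by positivity)
      (inv_lt_one_of_one_lt₀ hlam)).mul_const (σ w)
    rw [zero_mul] at h
    exact h.eventually_lt_const (lt_min hs hαs)
  have hβlarge : ∀ᶠ n : ℕ in atTop, B ≤ lam ^ n * β w :=
    ((tendsto_pow_atTop_atTop_of_one_lt hlam).atTop_mul_const hβw).eventually_ge_atTop B
  obtain ⟨n, hσn, hβn⟩ := (hσsmall.and hβlarge).exists
  set w' := (actR A)^[n] w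
  have hσw' : σ w' = lam⁻¹ ^ n * σ w := iterate_apply_eq_pow_mul hσ n w
  have hβw' : β w' = lam ^ n * β w := iterate_apply_eq_pow_mul hβ n w
  rw [← hσw', lt_min_iff] at hσn
  obtain ⟨j, hj, hjσ⟩ :=
    exists_nat_mul_mem_Icc (by rw [hσw']; positivity) hσn.1.le (α := α) hσn.2.le
  refine ⟨(j : ℝ) • w', nsmul_mem_lattice j ((mapsTo_actR_lattice A).iterate n hw), ?_, ?_⟩
  · rwa [map_smul, smul_eq_mul]
  · have : (1 : ℝ) ≤ j := by exact_mod_cast hj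
    rw [map_smul, smul_eq_mul]
    nlinarith [show 0 < β w' by rw [hβw']; positivity]

theorem exists_mem_lattice_mem_strip {e : V} (he : e ∈ lattice) (hσe : σ e ≠ 0)
    (hβe : β e ≠ 0) (α B : ℝ) {s : ℝ} (hs : 0 < s) :
    ∃ m ∈ lattice, σ m ∈ Icc α (α + s) ∧ B ≤ β m := by
  rcases lt_or_ge 0 (α + s) with hαs | hαs
  · obtain ⟨w, hw, hσw, hβw⟩ := exists_mem_lattice_apply_pos hlam hσ hβ he hσe hβe
    exact exists_mem_lattice_mem_strip_of_pos hlam hσ hβ hw hσw hβw B hs hαs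
  · -- mirror the strip through the unstable axis, replacing `σ` by `-σ`
    have hσ' : ∀ v, (-σ) (actR A v) = lam⁻¹ * (-σ) v := by simp [hσ]
    obtain ⟨w, hw, hσw, hβw⟩ := exists_mem_lattice_apply_pos hlam hσ' hβ he (by simpa) hβe
    obtain ⟨m, hm, hσm, hβm⟩ :=
      exists_mem_lattice_mem_strip_of_pos hlam hσ' hβ hw hσw hβw (α := -(α + s)) B hs (by linarith)
    refine ⟨m, hm, ⟨?_, ?_⟩, hβm⟩ <;> simp only [LinearMap.neg_apply, mem_Icc] at hσm <;> linarith

end Coordinates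

theorem exists_basis_eq_eigenvectors {A : Matrix (Fin 2) (Fin 2) ℤ} {lam : ℝ} (hlam : 1 < lam)
    {vs vu : V} (hvs : vs ≠ 0) (hvu : vu ≠ 0) (hAs : actR A vs = lam⁻¹ • vs)
    (hAu : actR A vu = lam • vu) : ∃ b : Module.Basis (Fin 2) ℝ V, b 0 = vs ∧ b 1 = vu := by
  have hind : LinearIndependent ℝ ![vs, vu] := by
    refine Module.End.eigenvectors_linearIndependent' (A.map (Int.cast : ℤ → ℝ)).mulVecLin
      ![lam⁻¹, lam] ?_ _ fun i => ?_
    · have : lam⁻¹ ≠ lam := (inv_lt_one_of_one_lt₀ hlam |>.trans hlam).ne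
      intro i j; fin_cases i <;> fin_cases j <;> simp [this, this.symm]
    · fin_cases i
      · exact Module.End.hasEigenvector_iff.2 ⟨Module.End.mem_eigenspace_iff.2 hAs, hvs⟩
      · exact Module.End.hasEigenvector_iff.2 ⟨Module.End.mem_eigenspace_iff.2 hAu, hvu⟩
  refine ⟨basisOfLinearIndependentOfCardEqFinrank hind (by simp), ?_, ?_⟩ <;>
    simp [coe_basisOfLinearIndependentOfCardEqFinrank]

theorem coord_actR_of_eigen (b : Module.Basis (Fin 2) ℝ V) {A : Matrix (Fin 2) (Fin 2) ℤ}
    {μ : Fin 2 → ℝ} (hA : ∀ j, actR A (b j) = μ j • b j) (i : Fin 2) (v : V) :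
    b.coord i (actR A v) = μ i * b.coord i v := by
  have h : (b.coord i).comp (A.map (Int.cast : ℤ → ℝ)).mulVecLin = μ i • b.coord i := by
    refine b.ext fun j => ?_
    simp only [LinearMap.comp_apply, Matrix.mulVecLin_apply, LinearMap.smul_apply]
    rw [show (A.map (Int.cast : ℤ → ℝ)) *ᵥ b j = μ j • b j from hA j]
    by_cases hij : i = j
    · subst hij; simp
    · simp [Module.Basis.coord_apply, Ne.symm hij]
  exact LinearMap.congr_fun h v

theorem exists_sum_range_le_lt {u : ℕ → ℝ} (hu : ∀ i, 0 ≤ u i) (h : ¬Summable u) {t : ℝ}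
    (ht : 0 ≤ t) : ∃ n, ∑ i ∈ Finset.range n, u i ≤ t ∧ t < ∑ i ∈ Finset.range (n + 1), u i := by
  obtain ⟨N, hN⟩ :=
    (((not_summable_iff_tendsto_nat_atTop_of_nonneg hu).1 h).eventually_gt_atTop t).exists
  induction N with
  | zero => simp at hN; linarith
  | succ N ih =>
    by_cases hle : ∑ i ∈ Finset.range N, u i ≤ t
    · exact ⟨N, hle, hN⟩
    · exact ih (not_le.1 hle)

section Staircase

variable (b : Module.Basis (Fin 2) ℝ V)

theorem Rect.mem_carrier_of_coord (R : Rect) {q : V}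
    (h₀ : b.coord 0 q - b.coord 0 R.p ∈ Icc 0 R.s) (h₁ : b.coord 1 q - b.coord 1 R.p ∈ Icc 0 R.u) :
    q ∈ R.carrier (b 0) (b 1) :=
  ⟨_, _, h₀.1, h₀.2, h₁.1, h₁.2, b.ext_elem fun i => by fin_cases i <;> simp⟩

theorem coord_p_of_topSide_subset_botSide {R R' : Rect}
    (h : R.topSide (b 0) (b 1) ⊆ R'.botSide (b 0)) :
    b.coord 1 R'.p = b.coord 1 R.p + R.u ∧ b.coord 0 R'.p ≤ b.coord 0 R.p ∧
      b.coord 0 R.p + R.s ≤ b.coord 0 R'.p + R'.s := by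
  obtain ⟨a₀, ha₀, -, h₀⟩ := h ⟨0, le_rfl, R.s_pos.le, rfl⟩
  obtain ⟨a₁, -, ha₁, h₁⟩ := h ⟨R.s, R.s_pos.le, le_rfl, rfl⟩
  have e₀ := congrArg (b.coord 0) h₀
  have e₁ := congrArg (b.coord 1) h₀
  have e₂ := congrArg (b.coord 0) h₁
  simp only [map_add, map_smul, Module.Basis.coord_apply, Module.Basis.repr_self, smul_eq_mul,
    mul_one, zero_smul, add_zero, Finsupp.single_eq_same, Finsupp.single_eq_of_ne zero_ne_one, Finsupp.single_eq_of_ne one_ne_zero]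
    at e₀ e₁ e₂ ⊢
  exact ⟨by linarith, by linarith, by linarith⟩

variable {R : ℕ → Rect} (hR : ∀ i, (R i).topSide (b 0) (b 1) ⊆ (R (i + 1)).botSide (b 0))
include hR

theorem coord_p_stairs (n : ℕ) :
    b.coord 1 (R n).p = b.coord 1 (R 0).p + ∑ i ∈ Finset.range n, (R i).u ∧
      b.coord 0 (R n).p ≤ b.coord 0 (R 0).p ∧
      b.coord 0 (R 0).p + (R 0).s ≤ b.coord 0 (R n).p + (R n).s := by
  induction n with
  | zero => simp
  | succ n ih =>
    obtain ⟨h₁, h₂, h₃⟩ := coord_p_of_topSide_subset_botSide b (hR n)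
    refine ⟨?_, by linarith [ih.2.1], by linarith [ih.2.2]⟩
    rw [Finset.sum_range_succ, h₁, ih.1, add_assoc]

theorem exists_mem_carrier_of_not_summable (hu : ¬Summable fun i => (R i).u) {q : V}
    (h₀ : b.coord 0 q - b.coord 0 (R 0).p ∈ Icc 0 (R 0).s) (h₁ : b.coord 1 (R 0).p ≤ b.coord 1 q) :
    ∃ n, q ∈ (R n).carrier (b 0) (b 1) := by
  obtain ⟨n, hn, hn'⟩ := exists_sum_range_le_lt (fun i => (R i).u_pos.le) hu (sub_nonneg.2 h₁)
  obtain ⟨hβ, hσ, hσ'⟩ := coord_p_stairs b hR n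
  rw [Finset.sum_range_succ] at hn'
  refine ⟨n, (R n).mem_carrier_of_coord b ⟨?_, ?_⟩ ⟨?_, ?_⟩⟩ <;> simp only [mem_Icc] at h₀ <;> linarith

end Staircase

theorem statement_8_general (A : Matrix (Fin 2) (Fin 2) ℤ) (hdet : A.det = 1)
    (lam : ℝ) (hlam : 1 < lam) (vs vu : V) (hvs : vs ≠ 0) (hvu : vu ≠ 0)
    (hAs : actR A vs = lam⁻¹ • vs) (hAu : actR A vu = lam • vu)
    (X Y : Set V)
    (hYfin : IsTorusFinite Y) (hYne : Y.Nonempty)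
    (x : V) (R : ℕ → Rect)
    (hst : IsPosStaircase vs vu X x R)
    (hdisj : ∀ i, Disjoint ((R i).carrier vs vu) Y) :
    Summable fun i => (R i).u := by
  obtain ⟨b, rfl, rfl⟩ := exists_basis_eq_eigenvectors hlam hvs hvu hAs hAu
  have hA : ∀ j, actR A (b j) = ![lam⁻¹, lam] j • b j := Fin.forall_fin_two.2 ⟨hAs, hAu⟩
  have hσ := coord_actR_of_eigen b hA 0
  have hβ := coord_actR_of_eigen b hA 1
  have hinj : ∀ v, b.coord 0 v = 0 → b.coord 1 v = 0 → v = 0 := fun v h₀ h₁ =>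
    b.forall_coord_eq_zero_iff.1 (Fin.forall_fin_two.2 ⟨h₀, h₁⟩)
  obtain ⟨e, he, hσe, hβe⟩ := exists_mem_lattice_apply_ne_zero hlam hσ hβ hdet hinj
  obtain ⟨F, -, rfl⟩ := hYfin
  obtain ⟨_, ⟨f, hf, l, hl, rfl⟩⟩ := hYne
  obtain ⟨-, -, -, -, -, htop, -⟩ := hst
  by_contra hu
  -- a lattice translate of `f + l` lies in the half-strip swept out by the staircase
  obtain ⟨m, hm, hσm, hβm⟩ := exists_mem_lattice_mem_strip hlam hσ hβ he hσe hβe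
    (b.coord 0 (R 0).p - b.coord 0 (f + l)) (b.coord 1 (R 0).p - b.coord 1 (f + l)) (R 0).s_pos
  obtain ⟨n, hn⟩ := exists_mem_carrier_of_not_summable b htop hu
    (q := f + l + m) (by simp only [mem_Icc, map_add] at hσm ⊢; constructor <;> linarith)
    (by simp only [map_add] at hβm ⊢; linarith)
  exact disjoint_left.1 (hdisj n) hn ⟨f, hf, l + m, add_mem_lattice hl hm, (add_assoc _ _ _).symm⟩

/-- every positive `𝒳`-staircase with origin `x ∈ 𝒳̃` whose
rectangles are all disjoint from `𝒴̃` has an axis of finite length, i.e. the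
series `Σ ℓ^u(R_i)` converges. -/
theorem statement_8 (A : Matrix (Fin 2) (Fin 2) ℤ) (hdet : A.det = 1) (htr : 2 < A.trace)
    (lam : ℝ) (hlam : 1 < lam) (vs vu : V) (hvs : vs ≠ 0) (hvu : vu ≠ 0)
    (hAs : actR A vs = lam⁻¹ • vs) (hAu : actR A vu = lam • vu)
    (X Y : Set V) (hXY : Disjoint X Y)
    (hXfin : IsTorusFinite X) (hXinv : IsInvariant A X)
    (hYfin : IsTorusFinite Y) (hYinv : IsInvariant A Y) (hYne : Y.Nonempty)
    (x : V) (hx : x ∈ X) (R : ℕ → Rect)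
    (hst : IsPosStaircase vs vu X x R)
    (hdisj : ∀ i, Disjoint ((R i).carrier vs vu) Y) :
    Summable fun i => (R i).u :=
  statement_8_general A hdet lam hlam vs vu hvs hvu hAs hAu X Y hYfin hYne x R hst hdisj

end Paper
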